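/- arXiv:1602.02527 — 4 statements merged into one kernel-verified Lean document; each statement's English description precedes it below -/
import Mathlib

section
/- If a cost-minimization game with continuously differentiable costs is (λ, μ)-locally smooth with λ > 0 and μ < 1, then for any pure Nash equilibrium z and any profile o, C(z) ≤ (λ/(1-μ))·C(o). -/
theorem le_div_one_sub_mul_of_le_mul_add_mul {K : Type*} [Field K] [LinearOrder K]
    [IsStrictOrderedRing K] {x y lam mu : K} (hmu : mu < 1) (h : x ≤ lam * y + mu * x) :
    x ≤ lam / (1 - mu) * y := by
  rw [div_mul_eq_mul_div, le_div_iff₀ (sub_pos.mpr hmu)]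
  linarith

theorem local_smooth_poa_general (n : ℕ) (C : Fin n → (Fin n → ℝ) → ℝ)
    (lam mu : ℝ) (hmu : mu < 1)
    (hsmooth : ∀ o z : Fin n → ℝ,
      ∑ i, (C i z + (o i - z i) * deriv (fun t => C i (Function.update z i t)) (z i))
        ≤ lam * ∑ i, C i o + mu * ∑ i, C i z)
    (z o : Fin n → ℝ)
    (hnash : ∀ i, deriv (fun t => C i (Function.update z i t)) (z i) = 0) :
    ∑ i, C i z ≤ (lam / (1 - mu)) * ∑ i, C i o := by
  have hsmooth_at_nash : ∑ i, C i z ≤ lam * ∑ i, C i o + mu * ∑ i, C i z := by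
    simpa only [hnash, mul_zero, add_zero] using hsmooth o z
  exact le_div_one_sub_mul_of_le_mul_add_mul hmu hsmooth_at_nash

theorem local_smooth_poa (n : ℕ) (C : Fin n → (Fin n → ℝ) → ℝ)
    (lam mu : ℝ) (hlam : 0 < lam) (hmu : mu < 1)
    (hsmooth : ∀ o z : Fin n → ℝ,
      ∑ i, (C i z + (o i - z i) * deriv (fun t => C i (Function.update z i t)) (z i))
        ≤ lam * ∑ i, C i o + mu * ∑ i, C i z)
    (z o : Fin n → ℝ)
    (hnash : ∀ i, deriv (fun t => C i (Function.update z i t)) (z i) = 0)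
    (hCo : 0 ≤ ∑ i, C i o) (hCz : 0 ≤ ∑ i, C i z) :
    ∑ i, C i z ≤ (lam / (1 - mu)) * ∑ i, C i o :=
  local_smooth_poa_general n C lam mu hmu hsmooth z o hnash
end

section
/- Let ε > 0 and let (w_{ij}) be nonnegative weights on n nodes satisfying Σ_{j≠i} w_{ji} ≤ (1/(1+ε))·(w_{ii} + Σ_{j≠i} w_{ij}) for every i. Then the opinion formation game with costs C_i(z) = w_{ii}(z_i - s_i)² + Σ_{j≠i} w_{ij}(z_i - z_j)² is (1 + 1/ε, 0)-locally smooth: for all profiles o, z, Σ_i (C_i(z) + (o_i - z_i)·∂C_i/∂z_i(z)) ≤ (1 + 1/ε)·C(o). -/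
/-- Individual cost in the opinion formation game. -/
def opCost (n : ℕ) (w : Fin n → Fin n → ℝ) (s : Fin n → ℝ) (i : Fin n)
    (z : Fin n → ℝ) : ℝ :=
  w i i * (z i - s i) ^ 2 + ∑ j ∈ Finset.univ.erase i, w i j * (z i - z j) ^ 2

/-!
For a quadratic `a (t - c)²`, the first-order expansion at `z` evaluated at `o` is
`a (o - c)² - a (o - z)²`. Summing over the terms of `C_i`, the left-hand side becomes
`Σ_i [w_ii (o_i - s_i)² + Σ_{j≠i} w_ij (o_i - z_j)² - (w_ii + Σ_{j≠i} w_ij)(o_i - z_i)²]`.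
Split `o_i - z_j = (o_i - o_j) + (o_j - z_j)` and use `(a + b)² ≤ (1 + 1/ε) a² + (1 + ε) b²`:
after exchanging the order of summation, the `(o_j - z_j)²` terms carry the in-weight of `j`
inflated by `1 + ε`, which the hypothesis bounds by the out-weight `w_jj + Σ_{i≠j} w_ji`, so
they are absorbed by the negative terms. What remains is at most `(1 + 1/ε) C(o)`.
-/

open Finset

theorem hasDerivAt_mul_sub_sq (a c t : ℝ) :
    HasDerivAt (fun t => a * (t - c) ^ 2) (2 * (a * (t - c))) t :=
  ((((hasDerivAt_id t).sub_const c).pow 2).const_mul a).congr_deriv <| by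
    simp only [id, Nat.cast_ofNat]
    ring

theorem mul_sub_sq_add_mul_deriv (a c o z : ℝ) :
    a * (z - c) ^ 2 + (o - z) * (2 * (a * (z - c))) = a * (o - c) ^ 2 - a * (o - z) ^ 2 := by
  ring

theorem Finset.sum_sum_erase_comm {ι G : Type*} [Fintype ι] [DecidableEq ι] [AddCommGroup G]
    (f : ι → ι → G) :
    ∑ i, ∑ j ∈ univ.erase i, f i j = ∑ j, ∑ i ∈ univ.erase j, f i j := by
  simp only [sum_erase_eq_sub (mem_univ _), sum_sub_distrib]
  rw [sum_comm]

theorem add_sq_le_one_add_inv_mul_sq_add_one_add_mul_sq {ε : ℝ} (hε : 0 < ε) (a b : ℝ) :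
    (a + b) ^ 2 ≤ (1 + 1 / ε) * a ^ 2 + (1 + ε) * b ^ 2 := by
  have hgap : (1 + 1 / ε) * a ^ 2 + (1 + ε) * b ^ 2 - (a + b) ^ 2 = (a - ε * b) ^ 2 / ε := by
    field_simp
    ring
  have : 0 ≤ (a - ε * b) ^ 2 / ε := by positivity
  linarith

section OpCost

variable {n : ℕ} (w : Fin n → Fin n → ℝ) (s : Fin n → ℝ)

theorem opCost_update_self (i : Fin n) (z : Fin n → ℝ) (t : ℝ) :
    opCost n w s i (Function.update z i t)
      = w i i * (t - s i) ^ 2 + ∑ j ∈ univ.erase i, w i j * (t - z j) ^ 2 := by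
  unfold opCost
  rw [Function.update_self]
  congr 1
  exact sum_congr rfl fun j hj => by rw [Function.update_of_ne (ne_of_mem_erase hj)]

theorem hasDerivAt_opCost_update (i : Fin n) (z : Fin n → ℝ) (t : ℝ) :
    HasDerivAt (fun t => opCost n w s i (Function.update z i t))
      (2 * (w i i * (t - s i) + ∑ j ∈ univ.erase i, w i j * (t - z j))) t := by
  simp only [opCost_update_self, mul_add, mul_sum]
  exact (hasDerivAt_mul_sub_sq _ _ t).add
    (HasDerivAt.fun_sum fun j _ => hasDerivAt_mul_sub_sq _ _ t)

theorem opCost_add_mul_deriv (i : Fin n) (o z : Fin n → ℝ) :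
    opCost n w s i z
        + (o i - z i) * deriv (fun t => opCost n w s i (Function.update z i t)) (z i)
      = w i i * (o i - s i) ^ 2 + ∑ j ∈ univ.erase i, w i j * (o i - z j) ^ 2
        - (w i i + ∑ j ∈ univ.erase i, w i j) * (o i - z i) ^ 2 := by
  rw [(hasDerivAt_opCost_update w s i z (z i)).deriv]
  have hz := opCost_update_self w s i z (z i)
  rw [Function.update_eq_self] at hz
  rw [hz]
  calc _ = (w i i * (z i - s i) ^ 2 + (o i - z i) * (2 * (w i i * (z i - s i))))
        + ∑ j ∈ univ.erase i,
            (w i j * (z i - z j) ^ 2 + (o i - z i) * (2 * (w i j * (z i - z j)))) := by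
        simp only [mul_add, mul_sum, sum_add_distrib]
        ring
    _ = _ := by simp only [mul_sub_sq_add_mul_deriv, sum_sub_distrib, add_mul, sum_mul]; ring

theorem sum_sum_erase_sq_le {ε : ℝ} (hε : 0 < ε) (hw : ∀ i j, 0 ≤ w i j)
    (hcond : ∀ i : Fin n, ∑ j ∈ univ.erase i, w j i
        ≤ (1 / (1 + ε)) * (w i i + ∑ j ∈ univ.erase i, w i j))
    (o z : Fin n → ℝ) :
    ∑ i, ∑ j ∈ univ.erase i, w i j * (o i - z j) ^ 2
      ≤ (1 + 1 / ε) * ∑ i, ∑ j ∈ univ.erase i, w i j * (o i - o j) ^ 2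
        + ∑ i, (w i i + ∑ j ∈ univ.erase i, w i j) * (o i - z i) ^ 2 := by
  have hin : ∀ i,
      (1 + ε) * ∑ j ∈ univ.erase i, w j i ≤ w i i + ∑ j ∈ univ.erase i, w i j := by
    intro i
    have := hcond i
    rwa [one_div_mul_eq_div, le_div_iff₀' (by linarith)] at this
  calc ∑ i, ∑ j ∈ univ.erase i, w i j * (o i - z j) ^ 2
      ≤ ∑ i, ∑ j ∈ univ.erase i,
          ((1 + 1 / ε) * (w i j * (o i - o j) ^ 2) + (1 + ε) * (w i j * (o j - z j) ^ 2)) := by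
        gcongr with i _ j _
        nlinarith [hw i j,
          add_sq_le_one_add_inv_mul_sq_add_one_add_mul_sq hε (o i - o j) (o j - z j)]
    _ = (1 + 1 / ε) * ∑ i, ∑ j ∈ univ.erase i, w i j * (o i - o j) ^ 2
          + (1 + ε) * ∑ i, ∑ j ∈ univ.erase i, w i j * (o j - z j) ^ 2 := by
        simp only [sum_add_distrib, mul_sum]
    _ = (1 + 1 / ε) * ∑ i, ∑ j ∈ univ.erase i, w i j * (o i - o j) ^ 2
          + ∑ i, (1 + ε) * (∑ j ∈ univ.erase i, w j i) * (o i - z i) ^ 2 := by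
        rw [sum_sum_erase_comm fun i j => w i j * (o j - z j) ^ 2]
        simp only [mul_sum, sum_mul, mul_assoc]
    _ ≤ _ := by
        gcongr with i
        exact hin i

end OpCost

theorem local_smoothness_of_condition (n : ℕ) (w : Fin n → Fin n → ℝ)
    (hw : ∀ i j, 0 ≤ w i j) (ε : ℝ) (hε : 0 < ε)
    (hcond : ∀ i : Fin n, ∑ j ∈ Finset.univ.erase i, w j i
        ≤ (1 / (1 + ε)) * (w i i + ∑ j ∈ Finset.univ.erase i, w i j))
    (s : Fin n → ℝ) (o z : Fin n → ℝ) :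
    ∑ i, (opCost n w s i z
        + (o i - z i) * deriv (fun t => opCost n w s i (Function.update z i t)) (z i))
      ≤ (1 + 1 / ε) * ∑ i, opCost n w s i o := by
  have hcross := sum_sum_erase_sq_le w hε hw hcond o z
  have hself : 0 ≤ 1 / ε * ∑ i, w i i * (o i - s i) ^ 2 :=
    mul_nonneg (by positivity) (sum_nonneg fun i _ => mul_nonneg (hw i i) (sq_nonneg _))
  rw [sum_congr rfl fun i _ => opCost_add_mul_deriv w s i o z]
  simp only [opCost, sum_add_distrib, sum_sub_distrib]
  linarith
end

section
/- Fix p > 1 and L ≥ 1 and consider the directed path (tree with all in-degrees 1) with nodes 0,1,...,L, where node 0 has self-loop weight √p and internal opinion 1, each node i ≥ 1 has self-loop weight √p − 1, internal opinion 0, and a single edge of weight 1 to node i−1. Then the profile z with z_i = p^{−i/2} is a Nash equilibrium of the opinion formation game. -/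
/-- Weights of the directed path on nodes `0, 1, ..., L`: node `0` has self-loop
weight `√p`, each node `i ≥ 1` has self-loop weight `√p - 1` and an edge of
weight `1` to node `i - 1`. -/
noncomputable def pathW (p : ℝ) (L : ℕ) (i j : Fin (L + 1)) : ℝ :=
  if j = i then (if i.val = 0 then Real.sqrt p else Real.sqrt p - 1)
  else if j.val + 1 = i.val then 1 else 0

/-- Internal opinions: node `0` has opinion `1`, all other nodes have opinion `0`. -/
def pathS (L : ℕ) (i : Fin (L + 1)) : ℝ := if i.val = 0 then 1 else 0

/-! Agent `i`'s cost is a quadratic in its own opinion with leading coefficient the total weight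
`W_i = w_ii + Σ_{j ≠ i} w_ij`, so it is minimised at `z_i` as soon as `W_i ≥ 0` and
`W_i z_i = w_ii s_i + Σ_{j ≠ i} w_ij z_j`. On the path every `W_i` equals `√p`, and this balance
equation reduces to `z_0 = 1` at the root and `z_k = √p z_{k+1}` along the edges, which
`z_k = p^(-k/2)` satisfies. -/

open Finset

section OpinionGame

variable {n : ℕ} (w : Fin n → Fin n → ℝ) (s : Fin n → ℝ) (i : Fin n) (z : Fin n → ℝ)

theorem opCost_update_eq_add
    (hz : (w i i + ∑ j ∈ univ.erase i, w i j) * z i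
      = w i i * s i + ∑ j ∈ univ.erase i, w i j * z j) (t : ℝ) :
    opCost n w s i (Function.update z i t)
      = opCost n w s i z + (w i i + ∑ j ∈ univ.erase i, w i j) * (t - z i) ^ 2 := by
  have h_others : ∑ j ∈ univ.erase i, w i j * (t - Function.update z i t j) ^ 2
      = ∑ j ∈ univ.erase i, w i j * (t - z j) ^ 2 :=
    sum_congr rfl fun j hj => by rw [Function.update_of_ne (ne_of_mem_erase hj)]
  have h_expand : ∀ j, w i j * (t - z j) ^ 2
      = w i j * (z i - z j) ^ 2 + w i j * (t - z i) ^ 2 + 2 * (t - z i) * (w i j * z i)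
        - 2 * (t - z i) * (w i j * z j) := fun j => by ring
  simp only [opCost, Function.update_self, h_others, h_expand, sum_add_distrib, sum_sub_distrib,
    ← sum_mul, ← mul_sum]
  linear_combination 2 * (t - z i) * hz

theorem opCost_le_update (hW : 0 ≤ w i i + ∑ j ∈ univ.erase i, w i j)
    (hz : (w i i + ∑ j ∈ univ.erase i, w i j) * z i
      = w i i * s i + ∑ j ∈ univ.erase i, w i j * z j) (t : ℝ) :
    opCost n w s i z ≤ opCost n w s i (Function.update z i t) := by
  rw [opCost_update_eq_add w s i z hz]
  exact le_add_of_nonneg_right (by positivity)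

end OpinionGame

section Path

variable (p : ℝ) (L : ℕ)

theorem pathW_zero_of_ne {j : Fin (L + 1)} (hj : j ≠ 0) : pathW p L 0 j = 0 := by
  simp [pathW, hj]

theorem pathW_succ_castSucc (k : Fin L) : pathW p L k.succ k.castSucc = 1 := by
  simp [pathW, k.castSucc_lt_succ.ne]

theorem pathW_succ_of_ne {k : Fin L} {j : Fin (L + 1)} (hj : j ≠ k.succ) (hj' : j ≠ k.castSucc) :
    pathW p L k.succ j = 0 := by
  have : j.val ≠ k.val := fun h => hj' (Fin.ext h)
  simp [pathW, hj, this]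

theorem sum_erase_zero_pathW_mul (g : Fin (L + 1) → ℝ) :
    ∑ j ∈ univ.erase 0, pathW p L 0 j * g j = 0 :=
  sum_eq_zero fun j hj => by rw [pathW_zero_of_ne p L (ne_of_mem_erase hj), zero_mul]

theorem sum_erase_succ_pathW_mul (k : Fin L) (g : Fin (L + 1) → ℝ) :
    ∑ j ∈ univ.erase k.succ, pathW p L k.succ j * g j = g k.castSucc := by
  rw [sum_eq_single_of_mem k.castSucc (mem_erase.2 ⟨k.castSucc_lt_succ.ne, mem_univ _⟩),
    pathW_succ_castSucc, one_mul]
  intro j hj hjk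
  rw [pathW_succ_of_ne p L (ne_of_mem_erase hj) hjk, zero_mul]

theorem pathW_self_add_sum_erase (i : Fin (L + 1)) :
    pathW p L i i + ∑ j ∈ univ.erase i, pathW p L i j = √p := by
  cases i using Fin.cases with
  | zero =>
    have h := sum_erase_zero_pathW_mul p L 1
    simp only [Pi.one_apply, mul_one] at h
    rw [h]
    simp [pathW]
  | succ k =>
    have h := sum_erase_succ_pathW_mul p L k 1
    simp only [Pi.one_apply, mul_one] at h
    rw [h]
    simp [pathW]

theorem rpow_neg_half_eq_sqrt_mul {p : ℝ} (hp : 0 < p) (m : ℕ) :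
    p ^ (-(m : ℝ) / 2) = √p * p ^ (-((m + 1 : ℕ) : ℝ) / 2) := by
  rw [Real.sqrt_eq_rpow, ← Real.rpow_add hp]
  push_cast
  ring_nf

theorem pathW_balance {p : ℝ} (hp : 0 < p) (i : Fin (L + 1)) :
    √p * p ^ (-(i.val : ℝ) / 2)
      = pathW p L i i * pathS L i
        + ∑ j ∈ univ.erase i, pathW p L i j * p ^ (-(j.val : ℝ) / 2) := by
  cases i using Fin.cases with
  | zero =>
    rw [sum_erase_zero_pathW_mul]
    simp [pathW, pathS]
  | succ k =>
    have hs : pathS L k.succ = 0 := if_neg (Fin.val_ne_of_ne k.succ_ne_zero)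
    rw [sum_erase_succ_pathW_mul, hs, mul_zero, zero_add, Fin.val_castSucc, Fin.val_succ, rpow_neg_half_eq_sqrt_mul hp k.val]

end Path

theorem path_nash_general (p : ℝ) (hp : 1 < p) (L : ℕ) :
    ∀ i : Fin (L + 1), ∀ t : ℝ,
      opCost (L + 1) (pathW p L) (pathS L) i (fun k => p ^ (-(k.val : ℝ) / 2))
        ≤ opCost (L + 1) (pathW p L) (pathS L) i
            (Function.update (fun k => p ^ (-(k.val : ℝ) / 2)) i t) := by
  intro i t
  apply opCost_le_update
  · rw [pathW_self_add_sum_erase]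
    exact Real.sqrt_nonneg p
  · rw [pathW_self_add_sum_erase]
    exact pathW_balance L (by linarith) i

theorem path_nash (p : ℝ) (hp : 1 < p) (L : ℕ) (hL : 1 ≤ L) :
    ∀ i : Fin (L + 1), ∀ t : ℝ,
      opCost (L + 1) (pathW p L) (pathS L) i (fun k => p ^ (-(k.val : ℝ) / 2))
        ≤ opCost (L + 1) (pathW p L) (pathS L) i
            (Function.update (fun k => p ^ (-(k.val : ℝ) / 2)) i t) :=
  path_nash_general p hp L
end

section
/- For the directed path game of the tree example with p > 1 and L levels, the price of anarchy is at least (p − √p)·L / √p, which tends to infinity as L → ∞; in particular the price of anarchy over all directed weighted graphs satisfying w_{ii} > 0 for all i is unbounded. -/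
/-!
Take the directed path `0 ← 1 ← ⋯ ← L` of the tree example with `q = √p`: node `0` has internal
opinion `1` and self-loop `q`, node `i ≥ 1` has internal opinion `0`, self-loop `q - 1` and an edge
of weight `1` to `i - 1`. The profile `z i = q⁻¹ ^ i` satisfies every player's first-order
condition, and since each cost is a convex quadratic in the player's own opinion, it is a Nash
equilibrium. Node `i ≥ 1` then pays `(q - 1) q⁻²ⁱ`; scaling its weights by `q²ⁱ = pⁱ`, which
accounts for the `pⁱ` nodes of level `i` of the tree and leaves best responses unchanged, makes
this `q² - q = p - √p` per level. The equilibrium therefore costs `(p - √p) L`, while the all-zero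
profile costs only `√p`. Letting `L → ∞` makes the ratio unbounded.
-/

open Finset

def IsNashEquilibrium (n : ℕ) (w : Fin n → Fin n → ℝ) (s z : Fin n → ℝ) : Prop :=
  ∀ i t, opCost n w s i z ≤ opCost n w s i (Function.update z i t)

section BestResponse

variable {n : ℕ} (w : Fin n → Fin n → ℝ) (s z : Fin n → ℝ) (i : Fin n)

lemma opCost_update_sub (t : ℝ) :
    opCost n w s i (Function.update z i t) - opCost n w s i z =
      (t - z i) ^ 2 * (w i i + ∑ j ∈ univ.erase i, w i j) +
        2 * (t - z i) * (w i i * (z i - s i) + ∑ j ∈ univ.erase i, w i j * (z i - z j)) := by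
  have hrest : ∑ j ∈ univ.erase i, w i j * (t - Function.update z i t j) ^ 2 =
      ∑ j ∈ univ.erase i, w i j * (t - z j) ^ 2 :=
    sum_congr rfl fun j hj => by rw [Function.update_of_ne (ne_of_mem_erase hj)]
  rw [opCost, opCost, Function.update_self, hrest, mul_add, mul_add, mul_sum, mul_sum,
    add_sub_add_comm, ← sum_sub_distrib, add_add_add_comm, ← sum_add_distrib]
  congr 1
  · ring
  · exact sum_congr rfl fun j _ => by ring

lemma opCost_le_update_of_grad_eq_zero (hw : ∀ j, 0 ≤ w i j)
    (hgrad : w i i * (z i - s i) + ∑ j ∈ univ.erase i, w i j * (z i - z j) = 0) (t : ℝ) :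
    opCost n w s i z ≤ opCost n w s i (Function.update z i t) := by
  have hdiff := opCost_update_sub w s z i t
  rw [hgrad, mul_zero, add_zero] at hdiff
  have : 0 ≤ (t - z i) ^ 2 * (w i i + ∑ j ∈ univ.erase i, w i j) :=
    mul_nonneg (sq_nonneg _) (add_nonneg (hw i) (sum_nonneg fun j _ => hw j))
  linarith

end BestResponse

namespace ScaledPath

variable (q : ℝ) (L : ℕ)

noncomputable def weight (i j : Fin (L + 1)) : ℝ :=
  q ^ (2 * i.val) *
    if i = j then (if i = 0 then q else q - 1) else if j.val + 1 = i.val then 1 else 0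

def opinion (i : Fin (L + 1)) : ℝ := if i = 0 then 1 else 0

noncomputable def equilibrium (i : Fin (L + 1)) : ℝ := q⁻¹ ^ i.val

lemma sum_erase_zero_weight_mul (f : Fin (L + 1) → ℝ) :
    ∑ j ∈ univ.erase 0, weight q L 0 j * f j = 0 :=
  sum_eq_zero fun j hj => by simp [weight, (ne_of_mem_erase hj).symm]

lemma sum_erase_succ_weight_mul (k : Fin L) (f : Fin (L + 1) → ℝ) :
    ∑ j ∈ univ.erase k.succ, weight q L k.succ j * f j =
      q ^ (2 * (k.val + 1)) * f k.castSucc := by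
  have hne : k.castSucc ≠ k.succ := Fin.castSucc_lt_succ.ne
  rw [sum_eq_single_of_mem k.castSucc (mem_erase.2 ⟨hne, mem_univ _⟩)]
  · simp [weight, hne.symm]
  · intro j hj hjk
    have hval : j.val ≠ k.val := fun h => hjk (Fin.ext h)
    simp [weight, (ne_of_mem_erase hj).symm, hval]

lemma weight_zero_self : weight q L 0 0 = q := by
  simp [weight]

lemma weight_succ_self (k : Fin L) :
    weight q L k.succ k.succ = q ^ (2 * (k.val + 1)) * (q - 1) := by
  simp [weight]

lemma weight_nonneg (hq : 1 ≤ q) (i j : Fin (L + 1)) : 0 ≤ weight q L i j := by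
  unfold weight
  have := pow_nonneg (zero_le_one.trans hq) (2 * i.val)
  split_ifs <;> nlinarith

lemma weight_self_pos (hq : 1 < q) (i : Fin (L + 1)) : 0 < weight q L i i := by
  cases i using Fin.cases with
  | zero => simpa [weight_zero_self] using zero_lt_one.trans hq
  | succ k =>
    rw [weight_succ_self]
    exact mul_pos (pow_pos (zero_lt_one.trans hq) _) (sub_pos.2 hq)

lemma isNashEquilibrium (hq : 1 ≤ q) :
    IsNashEquilibrium (L + 1) (weight q L) (opinion L) (equilibrium q L) := by
  have hq0 : q ≠ 0 := (zero_lt_one.trans_le hq).ne'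
  intro i t
  refine opCost_le_update_of_grad_eq_zero _ _ _ i (weight_nonneg q L hq i) ?_ t
  cases i using Fin.cases with
  | zero => simp only [sum_erase_zero_weight_mul, equilibrium, opinion]; simp
  | succ k =>
    rw [sum_erase_succ_weight_mul, weight_succ_self]
    simp only [equilibrium, opinion, Fin.val_succ, Fin.val_castSucc, Fin.succ_ne_zero,
      if_false, inv_pow]
    field_simp
    ring

lemma opCost_zero_equilibrium :
    opCost (L + 1) (weight q L) (opinion L) 0 (equilibrium q L) = 0 := by
  simp only [opCost, sum_erase_zero_weight_mul, equilibrium, opinion]; simp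

lemma opCost_succ_equilibrium (hq : q ≠ 0) (k : Fin L) :
    opCost (L + 1) (weight q L) (opinion L) k.succ (equilibrium q L) = q ^ 2 - q := by
  rw [opCost, sum_erase_succ_weight_mul, weight_succ_self]
  simp only [equilibrium, opinion, Fin.val_succ, Fin.val_castSucc, Fin.succ_ne_zero,
    if_false, inv_pow]
  field_simp
  ring

lemma sum_opCost_equilibrium (hq : q ≠ 0) :
    ∑ i, opCost (L + 1) (weight q L) (opinion L) i (equilibrium q L) = L * (q ^ 2 - q) := by
  simp [Fin.sum_univ_succ, opCost_zero_equilibrium, opCost_succ_equilibrium q L hq, mul_sub]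

lemma sum_opCost_zero :
    ∑ i, opCost (L + 1) (weight q L) (opinion L) i (fun _ => 0) = q := by
  simp only [Fin.sum_univ_succ, opCost, weight_zero_self, sum_erase_zero_weight_mul,
    sum_erase_succ_weight_mul, opinion]
  simp

end ScaledPath

theorem exists_isNashEquilibrium_cost_ge (p : ℝ) (hp : 1 < p) (L : ℕ) :
    ∃ (n : ℕ) (w : Fin n → Fin n → ℝ) (s z o : Fin n → ℝ),
      (∀ i j, 0 ≤ w i j) ∧ (∀ i, 0 < w i i) ∧ IsNashEquilibrium n w s z ∧
        0 < ∑ i, opCost n w s i o ∧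
        ((p - Real.sqrt p) * L / Real.sqrt p) * ∑ i, opCost n w s i o ≤
          ∑ i, opCost n w s i z := by
  set q := Real.sqrt p
  have hq : 1 < q := Real.lt_sqrt_of_sq_lt (by simpa using hp)
  have hp_eq : p = q ^ 2 := (Real.sq_sqrt (by linarith)).symm
  refine ⟨L + 1, ScaledPath.weight q L, ScaledPath.opinion L, ScaledPath.equilibrium q L,
    fun _ => 0, ScaledPath.weight_nonneg q L hq.le, ScaledPath.weight_self_pos q L hq,
    ScaledPath.isNashEquilibrium q L hq.le, ?_, ?_⟩
  · rw [ScaledPath.sum_opCost_zero]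
    linarith
  · rw [ScaledPath.sum_opCost_zero, ScaledPath.sum_opCost_equilibrium q L (by positivity),
      div_mul_cancel₀ _ (by positivity), hp_eq]
    exact le_of_eq (by ring)

theorem poa_unbounded :
    (∀ p : ℝ, 1 < p → ∀ L : ℕ, 1 ≤ L →
      ∃ (n : ℕ) (w : Fin n → Fin n → ℝ) (s z o : Fin n → ℝ),
        (∀ i j, 0 ≤ w i j) ∧ (∀ i, 0 < w i i) ∧
        (∀ i : Fin n, ∀ t : ℝ,
          opCost n w s i z ≤ opCost n w s i (Function.update z i t)) ∧
        0 < ∑ i, opCost n w s i o ∧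
        ((p - Real.sqrt p) * L / Real.sqrt p) * ∑ i, opCost n w s i o
          ≤ ∑ i, opCost n w s i z) ∧
    ∀ M : ℝ, ∃ (n : ℕ) (w : Fin n → Fin n → ℝ) (s z o : Fin n → ℝ),
      (∀ i j, 0 ≤ w i j) ∧ (∀ i, 0 < w i i) ∧
      (∀ i : Fin n, ∀ t : ℝ,
        opCost n w s i z ≤ opCost n w s i (Function.update z i t)) ∧
      0 < ∑ i, opCost n w s i o ∧
      M * ∑ i, opCost n w s i o ≤ ∑ i, opCost n w s i z := by
  refine ⟨fun p hp L _ => exists_isNashEquilibrium_cost_ge p hp L, fun M => ?_⟩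
  obtain ⟨n, w, s, z, o, hw, hdiag, hnash, hopt, hratio⟩ :=
    exists_isNashEquilibrium_cost_ge 4 (by norm_num) ⌈M⌉₊
  have hsqrt : Real.sqrt 4 = 2 := by
    rw [show (4 : ℝ) = 2 ^ 2 by norm_num, Real.sqrt_sq zero_le_two]
  refine ⟨n, w, s, z, o, hw, hdiag, hnash, hopt, le_trans ?_ hratio⟩
  calc M * ∑ i, opCost n w s i o ≤ ⌈M⌉₊ * ∑ i, opCost n w s i o :=
        mul_le_mul_of_nonneg_right (Nat.le_ceil M) hopt.le
    _ = (4 - Real.sqrt 4) * ⌈M⌉₊ / Real.sqrt 4 * ∑ i, opCost n w s i o := by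
        rw [hsqrt]; ring
end
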